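/- Let V(x, a, c) = σ·[(1/c)U(xc,a) − U(x,a) + (4(a−1)/√(2π))(1 − 1/c)] with U(x,a) = a²φ(x/a) − φ(x), φ the standard normal PDF, and σ > 0. Then for all x > 0, a ∈ (0,1), and c > 1, V(x, a, c) < 0. -/

import Mathlib

open Real MeasureTheory

noncomputable def stdPdf (t : ℝ) : ℝ := Real.exp (-t^2/2) / Real.sqrt (2*Real.pi)

noncomputable def stdCdf (x : ℝ) : ℝ := ∫ t in Set.Iic x, stdPdf t

noncomputable def U (x a : ℝ) : ℝ := a^2 * stdPdf (x/a) - stdPdf x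

noncomputable def V (σ x a c : ℝ) : ℝ :=
  σ * ((1/c) * U (x*c) a - U x a + (4*(a-1)/Real.sqrt (2*Real.pi)) * (1 - 1/c))

/-!
With `K = 4(1 - a)/√(2π)` one has `c V / σ = g c` for `g s = U (x s) a - s U x a - K (s - 1)`,
and `g 1 = 0`, so it suffices that `g` decreases on `[1, ∞)`.
Since `∂ₓ U (y, a) = y (φ y - φ (y/a))`, with `y = x s` the derivative is `g' s = W 1 - W a - K`
where `W t = x y φ (y/t) + t² φ (x/t)`, and by the mean value theorem it is enough that
`W' < 4/√(2π)` on `(a, 1)`. In the variables `p = x/t ≤ q = y/t`,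
`√(2π) W' t = t (p q³ e^{-q²/2} + (2 + p²) e^{-p²/2})`, and the bracket is at most `4`:
split at `p = 5/3` and use `yⁿ e^{-y} ≤ nⁿ e^{-n}` and the monotonicity of `(1 + r) e^{-r}`.
-/

lemma pow_mul_exp_neg_le {n : ℕ} (hn : n ≠ 0) {y : ℝ} (hy : 0 ≤ y) :
    y ^ n * exp (-y) ≤ n ^ n * exp (-n) := by
  have hn' : (n : ℝ) ≠ 0 := Nat.cast_ne_zero.2 hn
  calc y ^ n * exp (-y) = n ^ n * (y / n * exp (-(y / n))) ^ n := by
        rw [mul_pow, ← exp_nat_mul, div_pow, mul_neg, mul_div_cancel₀ _ hn']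
        field_simp
    _ ≤ n ^ n * exp (-1) ^ n := by gcongr; exact mul_exp_neg_le_exp_neg_one (y / n)
    _ = n ^ n * exp (-n) := by rw [← exp_nat_mul]; ring_nf

lemma one_add_mul_exp_neg_le_of_le {r₀ r : ℝ} (h₀ : 0 ≤ r₀) (h : r₀ ≤ r) :
    (1 + r) * exp (-r) ≤ (1 + r₀) * exp (-r₀) := by
  have key : 1 + r ≤ (1 + r₀) * exp (r - r₀) := by
    nlinarith [add_one_le_exp (r - r₀)]
  calc (1 + r) * exp (-r) ≤ (1 + r₀) * exp (r - r₀) * exp (-r) := by gcongr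
    _ = (1 + r₀) * exp (-r₀) := by rw [mul_assoc, ← exp_add]; ring_nf

lemma two_add_sq_mul_exp_antitoneOn :
    AntitoneOn (fun p : ℝ => (2 + p ^ 2) * exp (-p ^ 2 / 2)) (Set.Ici 0) := by
  intro p₀ hp₀ p hp h
  have := one_add_mul_exp_neg_le_of_le (by positivity : 0 ≤ p₀ ^ 2 / 2)
    (by gcongr : p₀ ^ 2 / 2 ≤ p ^ 2 / 2)
  simp only [neg_div] at this ⊢
  linarith

lemma pow_three_mul_exp_neg_sq_div_two_le {q : ℝ} (hq : 0 ≤ q) :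
    q ^ 3 * exp (-q ^ 2 / 2) ≤ 6 / 5 := by
  have h27 : (q ^ 2) ^ 3 * exp (-q ^ 2) ≤ 27 * exp (-3) := by
    convert pow_mul_exp_neg_le (n := 3) (by norm_num) (sq_nonneg q) using 2 <;> norm_num
  have he : exp (-3) ≤ 4 / 75 := by
    have h := pow_le_pow_left₀ (exp_pos (-1)).le exp_neg_one_lt_d9.le 3
    rw [← exp_nat_mul] at h
    norm_num at h
    linarith
  rw [← pow_le_pow_iff_left₀ (by positivity) (by norm_num) two_ne_zero]
  calc (q ^ 3 * exp (-q ^ 2 / 2)) ^ 2 = (q ^ 2) ^ 3 * exp (-q ^ 2) := by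
        rw [mul_pow, ← exp_nat_mul]; ring_nf
    _ ≤ (6 / 5) ^ 2 := by linarith

lemma pow_four_mul_exp_neg_sq_div_two_le (q : ℝ) :
    q ^ 4 * exp (-q ^ 2 / 2) ≤ 16 * exp (-2) := by
  have h := pow_mul_exp_neg_le (n := 2) two_ne_zero (by positivity : 0 ≤ q ^ 2 / 2)
  calc q ^ 4 * exp (-q ^ 2 / 2) = 4 * ((q ^ 2 / 2) ^ 2 * exp (-(q ^ 2 / 2))) := by ring_nf
    _ ≤ 16 * exp (-2) := by push_cast at h; linarith

lemma mul_pow_three_mul_exp_add_le_four {p q : ℝ} (hp : 0 ≤ p) (hpq : p ≤ q) :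
    p * q ^ 3 * exp (-q ^ 2 / 2) + (2 + p ^ 2) * exp (-p ^ 2 / 2) ≤ 4 := by
  have hq : 0 ≤ q := hp.trans hpq
  -- Below `5/3` the bounds sum to `(5/3)(6/5) + 2 = 4`, above it to `16 e⁻² + (43/9) e⁻¹ < 4`.
  rcases le_or_gt p (5 / 3) with hp_le | hp_gt
  · have hpq_term : p * (q ^ 3 * exp (-q ^ 2 / 2)) ≤ 5 / 3 * (6 / 5) :=
      mul_le_mul hp_le (pow_three_mul_exp_neg_sq_div_two_le hq) (by positivity) (by norm_num)
    have hp_term := two_add_sq_mul_exp_antitoneOn (Set.mem_Ici.2 le_rfl) (Set.mem_Ici.2 hp) hp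
    norm_num at hp_term
    linarith
  · have hpq_term : p * q ^ 3 * exp (-q ^ 2 / 2) ≤ 16 * exp (-1) ^ 2 :=
      calc p * q ^ 3 * exp (-q ^ 2 / 2) ≤ q * q ^ 3 * exp (-q ^ 2 / 2) := by gcongr
        _ = q ^ 4 * exp (-q ^ 2 / 2) := by ring
        _ ≤ 16 * exp (-2) := pow_four_mul_exp_neg_sq_div_two_le q
        _ = 16 * exp (-1) ^ 2 := by rw [← exp_nat_mul]; norm_num
    have hp_term : (2 + p ^ 2) * exp (-p ^ 2 / 2) ≤ 43 / 9 * exp (-1) :=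
      calc (2 + p ^ 2) * exp (-p ^ 2 / 2) ≤ (2 + (5 / 3) ^ 2) * exp (-(5 / 3) ^ 2 / 2) :=
            two_add_sq_mul_exp_antitoneOn (Set.mem_Ici.2 (by norm_num)) (Set.mem_Ici.2 hp)
              hp_gt.le
        _ ≤ 43 / 9 * exp (-1) := by norm_num
    nlinarith [exp_neg_one_lt_d9, exp_pos (-1)]

lemma sqrt_two_mul_pi_pos : 0 < √(2 * π) := sqrt_pos.2 (by positivity)

lemma hasDerivAt_stdPdf (t : ℝ) : HasDerivAt stdPdf (-t * stdPdf t) t := by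
  have h := (((hasDerivAt_pow 2 t).neg.div_const 2).exp).div_const √(2 * π)
  refine h.congr_deriv ?_
  simp only [stdPdf, Pi.neg_apply]
  push_cast
  ring

lemma hasDerivAt_stdPdf_div (y : ℝ) {t : ℝ} (ht : t ≠ 0) :
    HasDerivAt (fun s => stdPdf (y / s)) (y ^ 2 / t ^ 3 * stdPdf (y / t)) t := by
  have h := (hasDerivAt_stdPdf (y / t)).comp t ((hasDerivAt_inv ht).const_mul y)
  refine h.congr_deriv ?_
  field_simp

lemma hasDerivAt_U (x : ℝ) {a : ℝ} (ha : a ≠ 0) :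
    HasDerivAt (U · a) (x * (stdPdf x - stdPdf (x / a))) x := by
  have h := (((hasDerivAt_stdPdf (x / a)).comp x ((hasDerivAt_id x).div_const a)).const_mul
    (a ^ 2)).sub (hasDerivAt_stdPdf x)
  refine h.congr_deriv ?_
  field_simp
  ring

lemma mul_pow_three_mul_stdPdf_add_mul_stdPdf_lt {x y t : ℝ} (hx : 0 < x) (hxy : x ≤ y)
    (ht₀ : 0 < t) (ht₁ : t < 1) :
    x * y ^ 3 / t ^ 3 * stdPdf (y / t) + (2 * t + x ^ 2 / t) * stdPdf (x / t)
      < 4 / √(2 * π) := by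
  have hle := mul_pow_three_mul_exp_add_le_four (div_pos hx ht₀).le
    (div_le_div_of_nonneg_right hxy ht₀.le)
  have key : x * y ^ 3 / t ^ 3 * stdPdf (y / t) + (2 * t + x ^ 2 / t) * stdPdf (x / t)
      = t * (x / t * (y / t) ^ 3 * exp (-(y / t) ^ 2 / 2)
        + (2 + (x / t) ^ 2) * exp (-(x / t) ^ 2 / 2)) / √(2 * π) := by
    simp only [stdPdf]
    field_simp
  rw [key, div_lt_div_iff_of_pos_right sqrt_two_mul_pi_pos]
  nlinarith

lemma mul_mul_stdPdf_sub_sub_U_lt {x y a : ℝ} (hx : 0 < x) (hxy : x ≤ y) (ha₀ : 0 < a)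
    (ha₁ : a < 1) :
    x * y * (stdPdf y - stdPdf (y / a)) - U x a < 4 * (1 - a) / √(2 * π) := by
  set W : ℝ → ℝ := fun t => x * y * stdPdf (y / t) + t ^ 2 * stdPdf (x / t)
  have hW : ∀ t, t ≠ 0 → HasDerivAt W
      (x * y ^ 3 / t ^ 3 * stdPdf (y / t) + (2 * t + x ^ 2 / t) * stdPdf (x / t)) t := by
    intro t ht
    refine (((hasDerivAt_stdPdf_div y ht).const_mul (x * y)).add
      ((hasDerivAt_pow 2 t).mul (hasDerivAt_stdPdf_div x ht))).congr_deriv ?_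
    field_simp
    ring
  obtain ⟨ξ, hξ, hslope⟩ := exists_hasDerivAt_eq_slope W _ ha₁
    (fun t ht => (hW t (ha₀.trans_le ht.1).ne').continuousAt.continuousWithinAt)
    (fun t ht => hW t (ha₀.trans ht.1).ne')
  have hbound := mul_pow_three_mul_stdPdf_add_mul_stdPdf_lt hx hxy (ha₀.trans hξ.1) hξ.2
  rw [hslope, div_lt_iff₀ (sub_pos.2 ha₁)] at hbound
  calc x * y * (stdPdf y - stdPdf (y / a)) - U x a = W 1 - W a := by
        simp only [W, U, div_one, one_pow, one_mul]; ring
    _ < 4 / √(2 * π) * (1 - a) := hbound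
    _ = 4 * (1 - a) / √(2 * π) := by ring

lemma U_mul_sub_mul_U_lt {x a c : ℝ} (hx : 0 < x) (ha₀ : 0 < a) (ha₁ : a < 1) (hc : 1 < c) :
    U (x * c) a - c * U x a < 4 * (1 - a) / √(2 * π) * (c - 1) := by
  set K := 4 * (1 - a) / √(2 * π)
  set g : ℝ → ℝ := fun s => U (x * s) a - s * U x a - K * (s - 1)
  have hg : ∀ s, HasDerivAt g
      (x * (x * s * (stdPdf (x * s) - stdPdf (x * s / a))) - U x a - K) s := by
    intro s
    refine ((((hasDerivAt_U (x * s) ha₀.ne').comp s ((hasDerivAt_id s).const_mul x)).sub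
      ((hasDerivAt_id s).mul_const (U x a))).sub
      (((hasDerivAt_id s).sub_const 1).const_mul K)).congr_deriv ?_
    simp only [mul_one]
    ring
  have hanti : StrictAntiOn g (Set.Icc 1 c) := by
    refine strictAntiOn_of_deriv_neg (convex_Icc 1 c)
      (fun s _ => (hg s).continuousAt.continuousWithinAt) fun s hs => ?_
    rw [interior_Icc] at hs
    rw [(hg s).deriv]
    have := mul_mul_stdPdf_sub_sub_U_lt hx (le_mul_of_one_le_right hx.le hs.1.le) ha₀ ha₁
    linarith
  have := hanti (Set.left_mem_Icc.2 hc.le) (Set.right_mem_Icc.2 hc.le) hc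
  simp only [g, mul_one, one_mul, sub_self, mul_zero] at this
  linarith

theorem V_neg (σ x a c : ℝ) (hσ : 0 < σ) (hx : 0 < x)
    (ha : a ∈ Set.Ioo (0:ℝ) 1) (hc : 1 < c) :
    V σ x a c < 0 := by
  have hc₀ : 0 < c := one_pos.trans hc
  have hV : V σ x a c =
      σ / c * (U (x * c) a - c * U x a - 4 * (1 - a) / √(2 * π) * (c - 1)) := by
    simp only [V]
    field_simp
    ring
  rw [hV]
  exact mul_neg_of_pos_of_neg (div_pos hσ hc₀)
    (sub_neg.2 (U_mul_sub_mul_U_lt hx ha.1 ha.2 hc))
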